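/- arXiv:1604.08619 — 2 statements merged into one kernel-verified Lean document; each statement's English description precedes it below -/
import Mathlib

section
/- Let a finite abelian group Γ act on a C*-algebra B with fixed point algebra A, and suppose there exists a map σ : Γ̂ → U(B) with σ(k) ∈ B_k for each k. Then the map b ↦ M(b) with entries M(b)_{hk} = σ(h)⁻¹ b_{h-k} σ(k) (where b_j = E_j(b) is the j-th spectral component) is an injective *-homomorphism from B into the algebra of Γ̂ × Γ̂ matrices with entries in A. -/
/-!
Averaging against the characters of `Γ` splits `b` into spectral components
`E_j b ∈ B_j` with `∑ j, E_j b = b`. Orthogonality of characters turns the product into a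
convolution, `∑ l, E_{j l⁻¹} a * E_l b = E_j (a * b)`, and `|j g| = 1` gives
`star (E_j b) = E_{j⁻¹} (star b)`. Conjugating by the unitaries `σ` turns this convolution into
matrix multiplication and moves every entry of `M(b)` into `B_1 = A`; injectivity holds because
the column of `M(b)` at the trivial character recovers every `E_j b`.
-/

open Finset

section

variable {Γ : Type*} [CommGroup Γ]

/-- `v` lies in the spectral subspace `B_j` of the action `γ`. -/
def IsSpectral {V F : Type*} [SMul ℂ V] [FunLike F V V] (γ : Γ → F) (j : Γ →* ℂˣ) (v : V) :
    Prop :=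
  ∀ g, γ g v = (j g : ℂ) • v

section IsSpectralAlgebra

variable {B F : Type*} [Ring B] [Algebra ℂ B] [FunLike F B B]

theorem IsSpectral.mul [MulHomClass F B B] {γ : Γ → F} {j l : Γ →* ℂˣ} {a b : B}
    (ha : IsSpectral γ j a) (hb : IsSpectral γ l b) : IsSpectral γ (j * l) (a * b) := by
  intro g
  rw [map_mul, ha, hb, smul_mul_smul_comm, MonoidHom.mul_apply, Units.val_mul]

theorem IsSpectral.val_inv [MonoidHomClass F B B] {γ : Γ → F} {j : Γ →* ℂˣ} {u : Bˣ}
    (hu : IsSpectral γ j (u : B)) : IsSpectral γ j⁻¹ (↑u⁻¹ : B) := by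
  intro g
  have hγu : γ g u * (((j g)⁻¹ : ℂˣ) : ℂ) • (↑u⁻¹ : B) = 1 := by
    rw [hu, smul_mul_smul_comm, Units.mul_inv, Units.mul_inv, one_smul]
  calc γ g ↑u⁻¹ = γ g (↑u⁻¹ * u) * (((j g)⁻¹ : ℂˣ) : ℂ) • (↑u⁻¹ : B) := by
        rw [map_mul, mul_assoc, hγu, mul_one]
    _ = (j⁻¹ g : ℂ) • (↑u⁻¹ : B) := by
        rw [Units.inv_mul, map_one, one_mul, MonoidHom.inv_apply]

end IsSpectralAlgebra

variable [Fintype Γ]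

theorem sum_monoidHom_units_apply [DecidableEq Γ] [Fintype (Γ →* ℂˣ)] (g : Γ) :
    ∑ j : Γ →* ℂˣ, (j g : ℂ) = if g = 1 then (Fintype.card Γ : ℂ) else 0 := by
  have : NeZero (Monoid.exponent Γ : ℂ) :=
    ⟨Nat.cast_ne_zero.mpr Monoid.exponent_ne_zero_of_finite⟩
  split_ifs with hg
  · simp only [hg, map_one, Units.val_one, sum_const, card_univ, nsmul_eq_mul, mul_one,
      Fintype.card_eq_nat_card, CommGroup.card_monoidHom_of_hasEnoughRootsOfUnity]
  · obtain ⟨φ, hφ⟩ := CommGroup.exists_apply_ne_one_of_hasEnoughRootsOfUnity Γ ℂ hg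
    refine eq_zero_of_mul_eq_self_left (b := (φ g : ℂ)) (by simpa using hφ) ?_
    rw [mul_sum]
    exact Fintype.sum_bijective _ (Group.mulLeft_bijective φ) _ _ fun j ↦ by simp

theorem conj_monoidHom_units_apply (j : Γ →* ℂˣ) (g : Γ) :
    starRingEnd ℂ (j g) = ((j g)⁻¹ : ℂˣ) := by
  have hpow : (j g : ℂ) ^ Fintype.card Γ = 1 := by
    rw [← Units.val_pow_eq_pow_val, ← map_pow, pow_card_eq_one, map_one, Units.val_one]
  rw [Units.val_inv_eq_inv_val,
    Complex.inv_eq_conj (Complex.norm_eq_one_of_pow_eq_one hpow Fintype.card_ne_zero)]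

section SpectralProj

variable {V F : Type*} [AddCommGroup V] [Module ℂ V] [FunLike F V V]

/-- The spectral projection `E_j` onto `B_j`. -/
noncomputable def spectralProj (γ : Γ → F) (j : Γ →* ℂˣ) (v : V) : V :=
  (Fintype.card Γ : ℂ)⁻¹ • ∑ g : Γ, (((j g)⁻¹ : ℂˣ) : ℂ) • γ g v

theorem spectralProj_add [AddHomClass F V V] (γ : Γ → F) (j : Γ →* ℂˣ) (v w : V) :
    spectralProj γ j (v + w) = spectralProj γ j v + spectralProj γ j w := by
  simp only [spectralProj, map_add, smul_add, sum_add_distrib]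

theorem sum_spectralProj [Fintype (Γ →* ℂˣ)] (γ : Γ → F) (hγ1 : ∀ v, γ 1 v = v) (v : V) :
    ∑ j : Γ →* ℂˣ, spectralProj γ j v = v := by
  classical
  have hcard : (Fintype.card Γ : ℂ) ≠ 0 := Nat.cast_ne_zero.mpr Fintype.card_ne_zero
  simp only [spectralProj, ← smul_sum]
  rw [sum_comm]
  simp only [← sum_smul, ← map_inv, sum_monoidHom_units_apply, inv_eq_one, ite_smul, zero_smul,
    sum_ite_eq', mem_univ, if_true, smul_smul, inv_mul_cancel₀ hcard, one_smul, hγ1]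

theorem isSpectral_spectralProj [LinearMapClass F ℂ V V] (γ : Γ → F)
    (hγmul : ∀ g g' v, γ g (γ g' v) = γ (g * g') v) (j : Γ →* ℂˣ) (v : V) :
    IsSpectral γ j (spectralProj γ j v) := by
  intro g
  simp only [spectralProj, map_smul, map_sum, hγmul, smul_sum, smul_smul]
  refine Fintype.sum_equiv (Equiv.mulLeft g) _ _ fun x ↦ ?_
  simp only [Equiv.coe_mulLeft, map_mul, mul_inv_rev, Units.val_mul, Units.val_inv_eq_inv_val]
  congr 1
  field_simp

theorem star_spectralProj [StarAddMonoid V] [StarModule ℂ V] [StarHomClass F V V]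
    (γ : Γ → F) (j : Γ →* ℂˣ) (v : V) :
    star (spectralProj γ j v) = spectralProj γ j⁻¹ (star v) := by
  simp only [spectralProj, star_smul, star_sum, map_star, star_inv₀, Complex.star_def,
    map_natCast, Units.val_inv_eq_inv_val, conj_monoidHom_units_apply, MonoidHom.inv_apply,
    inv_inv]

end SpectralProj

section SpectralMatrix

variable {B F : Type*} [Ring B] [Algebra ℂ B] [FunLike F B B]

theorem sum_spectralProj_mul [MulHomClass F B B] [Fintype (Γ →* ℂˣ)] (γ : Γ → F)
    (j : Γ →* ℂˣ) (a b : B) :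
    ∑ l : Γ →* ℂˣ, spectralProj γ (j * l⁻¹) a * spectralProj γ l b =
      spectralProj γ j (a * b) := by
  classical
  have hc : (Fintype.card Γ : ℂ) ≠ 0 := Nat.cast_ne_zero.mpr Fintype.card_ne_zero
  calc ∑ l : Γ →* ℂˣ, spectralProj γ (j * l⁻¹) a * spectralProj γ l b
      = ∑ l : Γ →* ℂˣ, ∑ g : Γ, ∑ g' : Γ, ((Fintype.card Γ : ℂ)⁻¹ * (Fintype.card Γ : ℂ)⁻¹ *
          ((j g)⁻¹ : ℂˣ) * (l (g * g'⁻¹) : ℂ)) • (γ g a * γ g' b) := by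
        refine sum_congr rfl fun l _ ↦ ?_
        simp only [spectralProj, smul_mul_smul_comm, sum_mul_sum, smul_sum, smul_smul]
        refine sum_congr rfl fun g _ ↦ sum_congr rfl fun g' _ ↦ ?_
        simp only [MonoidHom.mul_apply, MonoidHom.inv_apply, map_mul, map_inv, mul_inv_rev,
          inv_inv, Units.val_mul]
        congr 1
        ring
    _ = ∑ g : Γ, ∑ g' : Γ, ((Fintype.card Γ : ℂ)⁻¹ * (Fintype.card Γ : ℂ)⁻¹ *
          ((j g)⁻¹ : ℂˣ) * if g = g' then (Fintype.card Γ : ℂ) else 0) • (γ g a * γ g' b) := by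
        rw [sum_comm]
        refine sum_congr rfl fun g _ ↦ ?_
        rw [sum_comm]
        simp only [← sum_smul, ← mul_sum, sum_monoidHom_units_apply, mul_inv_eq_one]
    _ = spectralProj γ j (a * b) := by
        simp only [mul_ite, mul_zero, ite_smul, zero_smul, sum_ite_eq, mem_univ, if_true,
          spectralProj, smul_sum, smul_smul, map_mul]
        refine sum_congr rfl fun g _ ↦ ?_
        field_simp

noncomputable def spectralMatrix (σ : (Γ →* ℂˣ) → Bˣ) (γ : Γ → F) (b : B) :
    Matrix (Γ →* ℂˣ) (Γ →* ℂˣ) B :=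
  Matrix.of fun h k ↦ (↑(σ h)⁻¹ : B) * spectralProj γ (h * k⁻¹) b * σ k

/- The instance `CommGroup (Γ →* ℂˣ)` does not unfold reducibly to the monoid structure on `ℂˣ`
appearing in the type, so group identities among characters are checked pointwise. -/
theorem spectralMatrix_injective [Fintype (Γ →* ℂˣ)] (σ : (Γ →* ℂˣ) → Bˣ) (γ : Γ → F)
    (hγ1 : ∀ b, γ 1 b = b) : Function.Injective (spectralMatrix σ γ) := by
  have hproj : ∀ b j, spectralProj γ j b = σ j * spectralMatrix σ γ b j 1 * ↑(σ 1)⁻¹ := by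
    intro b j
    simp [spectralMatrix, mul_assoc, show j * 1⁻¹ = j by ext; simp]
  intro b b' h
  rw [← sum_spectralProj γ hγ1 b, ← sum_spectralProj γ hγ1 b']
  simp only [hproj, h]

theorem spectralMatrix_add [AddHomClass F B B] (σ : (Γ →* ℂˣ) → Bˣ) (γ : Γ → F) (b b' : B) :
    spectralMatrix σ γ (b + b') = spectralMatrix σ γ b + spectralMatrix σ γ b' := by
  ext h k
  simp only [spectralMatrix, Matrix.of_apply, Matrix.add_apply, spectralProj_add, mul_add,
    add_mul]

theorem spectralMatrix_mul [MulHomClass F B B] [Fintype (Γ →* ℂˣ)] (σ : (Γ →* ℂˣ) → Bˣ)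
    (γ : Γ → F) (b b' : B) :
    spectralMatrix σ γ (b * b') = spectralMatrix σ γ b * spectralMatrix σ γ b' := by
  ext h k
  simp only [spectralMatrix, Matrix.mul_apply, Matrix.of_apply]
  rw [← sum_spectralProj_mul, mul_sum, sum_mul]
  refine Fintype.sum_equiv (Equiv.mulRight k) _ _ fun l ↦ ?_
  rw [Equiv.coe_mulRight, show h * k⁻¹ * l⁻¹ = h * (l * k)⁻¹ by ext; simp [mul_assoc],
    show l * k * k⁻¹ = l by ext; simp]
  simp only [mul_assoc, Units.mul_inv_cancel_left]

theorem spectralMatrix_star [StarRing B] [StarModule ℂ B] [StarHomClass F B B]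
    (σ : (Γ →* ℂˣ) → Bˣ) (γ : Γ → F) (hσstar : ∀ k, star (σ k : B) = ↑(σ k)⁻¹) (b : B) :
    spectralMatrix σ γ (star b) = star (spectralMatrix σ γ b) := by
  ext h k
  have hσstar' : star (↑(σ k)⁻¹ : B) = σ k := by rw [← hσstar, star_star]
  simp only [spectralMatrix, Matrix.star_apply, Matrix.of_apply, star_mul, star_spectralProj,
    hσstar, hσstar', mul_assoc, show (k * h⁻¹)⁻¹ = h * k⁻¹ by ext; simp]

theorem map_spectralMatrix_apply [AlgHomClass F ℂ B B] (σ : (Γ →* ℂˣ) → Bˣ) (γ : Γ → F)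
    (hγmul : ∀ g g' b, γ g (γ g' b) = γ (g * g') b) (hσ : ∀ k, IsSpectral γ k (σ k : B))
    (b : B) (h k : Γ →* ℂˣ) (g : Γ) :
    γ g (spectralMatrix σ γ b h k) = spectralMatrix σ γ b h k := by
  have hspec := ((hσ h).val_inv.mul (isSpectral_spectralProj γ hγmul (h * k⁻¹) b)).mul (hσ k)
  rw [show h⁻¹ * (h * k⁻¹) * k = 1 by ext; simp] at hspec
  exact (hspec g).trans (one_smul ℂ _)

end SpectralMatrix

end

theorem stmt4_general {B : Type*} [Ring B] [StarRing B] [Algebra ℂ B] [StarModule ℂ B]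
    {Γ : Type*} [CommGroup Γ] [Fintype Γ] [Fintype (Γ →* ℂˣ)]
    (γ : Γ → (B ≃⋆ₐ[ℂ] B))
    (hγ1 : ∀ b : B, γ 1 b = b)
    (hγmul : ∀ g g' (b : B), γ g (γ g' b) = γ (g * g') b)
    (σ : (Γ →* ℂˣ) → Bˣ)
    (hσ : ∀ (k : Γ →* ℂˣ) (g : Γ), γ g (σ k : B) = (k g : ℂ) • (σ k : B))
    (hσstar : ∀ k : Γ →* ℂˣ, star ((σ k : Bˣ) : B) = (((σ k)⁻¹ : Bˣ) : B))
    (M : B → Matrix (Γ →* ℂˣ) (Γ →* ℂˣ) B)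
    (hM : ∀ b h k, M b h k =
      (((σ h)⁻¹ : Bˣ) : B) *
        ((Fintype.card Γ : ℂ)⁻¹ •
          ∑ g : Γ, ((((h * k⁻¹) g)⁻¹ : ℂˣ) : ℂ) • γ g b) *
        ((σ k : Bˣ) : B)) :
    Function.Injective M ∧
    (∀ b b', M (b + b') = M b + M b') ∧
    (∀ b b', M (b * b') = M b * M b') ∧
    (∀ b, M (star b) = star (M b)) ∧
    (∀ b h k g, γ g (M b h k) = M b h k) := by
  obtain rfl : M = spectralMatrix σ γ := funext fun b ↦ Matrix.ext fun h k ↦ hM b h k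
  exact ⟨spectralMatrix_injective σ γ hγ1, spectralMatrix_add σ γ, spectralMatrix_mul σ γ,
    spectralMatrix_star σ γ hσstar, map_spectralMatrix_apply σ γ hγmul hσ⟩

/-- For a regular covering (each spectral subspace contains a unitary `σ k`), the map
`b ↦ M(b)`, `M(b)_{hk} = σ(h)⁻¹ E_{h k⁻¹}(b) σ(k)`, is an injective *-homomorphism of `B`
into the `Γ̂ × Γ̂` matrices with entries in the fixed point algebra `A`. -/
theorem stmt4 {B : Type*} [Ring B] [StarRing B] [Algebra ℂ B] [StarModule ℂ B]
    {Γ : Type*} [CommGroup Γ] [Fintype Γ] [Fintype (Γ →* ℂˣ)] [DecidableEq (Γ →* ℂˣ)]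
    (γ : Γ → (B ≃⋆ₐ[ℂ] B))
    (hγ1 : ∀ b : B, γ 1 b = b)
    (hγmul : ∀ g g' (b : B), γ g (γ g' b) = γ (g * g') b)
    (σ : (Γ →* ℂˣ) → Bˣ)
    (hσ : ∀ (k : Γ →* ℂˣ) (g : Γ), γ g (σ k : B) = (k g : ℂ) • (σ k : B))
    (hσstar : ∀ k : Γ →* ℂˣ, star ((σ k : Bˣ) : B) = (((σ k)⁻¹ : Bˣ) : B))
    (hσ1 : σ 1 = 1)
    (M : B → Matrix (Γ →* ℂˣ) (Γ →* ℂˣ) B)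
    (hM : ∀ b h k, M b h k =
      (((σ h)⁻¹ : Bˣ) : B) *
        ((Fintype.card Γ : ℂ)⁻¹ •
          ∑ g : Γ, ((((h * k⁻¹) g)⁻¹ : ℂˣ) : ℂ) • γ g b) *
        ((σ k : Bˣ) : B)) :
    Function.Injective M ∧
    (∀ b b', M (b + b') = M b + M b') ∧
    (∀ b b', M (b * b') = M b * M b') ∧
    (∀ b, M (star b) = star (M b)) ∧
    (∀ b h k g, γ g (M b h k) = M b h k) :=
  stmt4_general γ hγ1 hγmul σ hσ hσstar M hM
end

section
/- In M₃(ℂ) with the ℤ/2 action γ₀ = id, γ₁ = Ad(J) where J = diag(1,-1,-1), the spectral subspace B₁ = {x : JxJ⁻¹ = -x} consists of matrices of the form [[0,a,b],[c,0,0],[d,0,0]] and contains no invertible element. -/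
/-!
Conjugation by `J = diag(±1)` multiplies the entry `x i j` by `s i * s j`, so `J x J⁻¹ = -x` says
exactly that `x` vanishes on the entries with `s i = s j`. Any such `x` is singular because
`det (J x J⁻¹) = det x` while `det (-x) = -det x` in odd dimension.
-/

section SignArithmetic

variable {R : Type*} [CommRing R] [NoZeroDivisors R] [NeZero (2 : R)]

theorem eq_neg_self_iff_of_two_ne_zero {a : R} : a = -a ↔ a = 0 := by
  rw [eq_neg_iff_add_eq_zero, ← two_mul, mul_eq_zero, or_iff_right two_ne_zero]

theorem sign_mul_mul_sign_eq_neg_iff {a b : R} (ha : a = 1 ∨ a = -1) (hb : b = 1 ∨ b = -1)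
    (y : R) : a * y * b = -y ↔ (a = b → y = 0) := by
  have h1 : (1 : R) ≠ -1 := fun h =>
    (two_ne_zero : (2 : R) ≠ 0) (by rw [← one_add_one_eq_two, ← eq_neg_iff_add_eq_zero]; exact h)
  rcases ha with rfl | rfl <;> rcases hb with rfl | rfl <;>
    simp [h1, h1.symm, eq_neg_self_iff_of_two_ne_zero]

end SignArithmetic

namespace Matrix

variable {n R : Type*} [Fintype n] [DecidableEq n]

theorem inv_diagonal_of_mul_self_eq_one [CommRing R] {s : n → R} (hs : ∀ i, s i * s i = 1) :
    (diagonal s)⁻¹ = diagonal s :=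
  inv_eq_right_inv (by rw [diagonal_mul_diagonal]; exact diagonal_eq_one.mpr (funext hs))

theorem diagonal_conj_eq_neg_iff [CommRing R] [NoZeroDivisors R] [NeZero (2 : R)] {s : n → R}
    (hs : ∀ i, s i = 1 ∨ s i = -1) (x : Matrix n n R) :
    diagonal s * x * (diagonal s)⁻¹ = -x ↔ ∀ i j, s i = s j → x i j = 0 := by
  have hss : ∀ i, s i * s i = 1 := fun i => by rcases hs i with h | h <;> simp [h]
  rw [inv_diagonal_of_mul_self_eq_one hss, ← Matrix.ext_iff]
  simp only [mul_diagonal, diagonal_mul, neg_apply, sign_mul_mul_sign_eq_neg_iff (hs _) (hs _)]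

theorem det_eq_zero_of_conj_eq_neg [CommRing R] [NoZeroDivisors R] [NeZero (2 : R)]
    (hn : Odd (Fintype.card n)) {J x : Matrix n n R} (h : J * x * J⁻¹ = -x) : x.det = 0 := by
  have : Nonempty n := Fintype.card_pos_iff.mp hn.pos
  have hneg : (-x).det = -x.det := by rw [det_neg, hn.neg_one_pow, neg_one_mul]
  by_cases hJ : IsUnit J
  · rw [eq_neg_self_iff_of_two_ne_zero.symm, ← hneg, ← h, det_conj hJ]
  -- for singular `J` the junk value `J⁻¹ = 0` forces `x = 0`
  · rw [nonsing_inv_apply_not_isUnit J ((isUnit_iff_isUnit_det J).not.mp hJ), mul_zero] at h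
    rw [← neg_eq_zero, ← hneg, ← h, det_zero]

theorem not_isUnit_of_conj_eq_neg [CommRing R] [Nontrivial R] [NoZeroDivisors R]
    [NeZero (2 : R)] (hn : Odd (Fintype.card n)) {J x : Matrix n n R} (h : J * x * J⁻¹ = -x) :
    ¬IsUnit x := by
  rw [isUnit_iff_isUnit_det, det_eq_zero_of_conj_eq_neg hn h]
  exact not_isUnit_zero

end Matrix

/-- In `M₃(ℂ)` with the `ℤ/2`-action `γ₁ = Ad(J)`, `J = diag(1,-1,-1)`, the spectral subspace
`B₁ = {x : J x J⁻¹ = -x}` consists exactly of the matrices of the form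
`[[0,a,b],[c,0,0],[d,0,0]]`, and it contains no invertible element. -/
theorem stmt7 (J : Matrix (Fin 3) (Fin 3) ℂ)
    (hJ : J = Matrix.diagonal ![1, -1, -1]) :
    ∀ x : Matrix (Fin 3) (Fin 3) ℂ,
      ((J * x * J⁻¹ = -x) ↔
        (x 0 0 = 0 ∧ x 1 1 = 0 ∧ x 1 2 = 0 ∧ x 2 1 = 0 ∧ x 2 2 = 0)) ∧
      (J * x * J⁻¹ = -x → ¬ IsUnit x) := by
  intro x
  refine ⟨?_, Matrix.not_isUnit_of_conj_eq_neg (by decide)⟩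
  have hs : ∀ i, (![1, -1, -1] : Fin 3 → ℂ) i = 1 ∨ (![1, -1, -1] : Fin 3 → ℂ) i = -1 := by
    intro i; fin_cases i <;> simp
  rw [hJ, Matrix.diagonal_conj_eq_neg_iff hs]
  norm_num [Fin.forall_fin_succ, and_assoc]
end
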